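/- arXiv:1412.5099 — 4 statements merged into one kernel-verified Lean document; each statement's English description precedes it below -/
import Mathlib

section
/- For positive integers l, l', s, L with l + l' = L and L ≤ s, the sum over k from l to s - L + l of C(k-1, k-l) * C(s-k-1, s-k-l') equals C(s-1, s-L). -/
open Finset

private lemma aux_hockey : ∀ n b : ℕ,
    ∑ i ∈ Finset.range (n + 1), Nat.choose (b + (n - i)) (n - i)
      = Nat.choose (b + n + 1) n := by
  intro n
  induction n with
  | zero => simp
  | succ n ih =>
    intro b
    rw [Finset.sum_range_succ']
    simp only [Nat.succ_sub_succ, Nat.sub_zero]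
    rw [ih b]
    have e : b + (n + 1) + 1 = (b + n + 1) + 1 := by omega
    have e2 : b + (n + 1) = b + n + 1 := by omega
    rw [e, Nat.choose_succ_succ, e2]

private lemma aux_conv : ∀ n a b : ℕ,
    ∑ i ∈ Finset.range (n + 1),
      Nat.choose (a + i) i * Nat.choose (b + (n - i)) (n - i)
      = Nat.choose (a + b + n + 1) n := by
  intro n
  induction n with
  | zero => simp
  | succ n ih =>
    intro a b
    induction a with
    | zero =>
      simp only [Nat.zero_add, Nat.choose_self, one_mul]
      rw [aux_hockey (n + 1) b]
    | succ a iha =>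
      rw [Finset.sum_range_succ']
      simp only [Nat.succ_sub_succ, Nat.sub_zero, Nat.choose_zero_right, one_mul,
        Nat.add_zero]
      have key : ∀ i ∈ Finset.range (n + 1),
          Nat.choose (a + 1 + (i + 1)) (i + 1) * Nat.choose (b + (n - i)) (n - i)
            = Nat.choose (a + 1 + i) i * Nat.choose (b + (n - i)) (n - i)
              + Nat.choose (a + (i + 1)) (i + 1) * Nat.choose (b + (n - i)) (n - i) := by
        intro i _
        have e1 : a + 1 + (i + 1) = (a + 1 + i) + 1 := by omega
        have e2 : a + 1 + i = a + (i + 1) := by omega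
        rw [e1, Nat.choose_succ_succ, add_mul, e2]
      rw [Finset.sum_congr rfl key, Finset.sum_add_distrib, ih (a + 1) b]
      rw [Finset.sum_range_succ'] at iha
      simp only [Nat.succ_sub_succ, Nat.sub_zero, Nat.choose_zero_right, one_mul,
        Nat.add_zero] at iha
      rw [add_assoc, iha]
      have e3 : a + 1 + b + (n + 1) + 1 = (a + b + (n + 1) + 1) + 1 := by omega
      have e4 : a + 1 + b + n + 1 = a + b + (n + 1) + 1 := by omega
      conv_rhs => rw [e3, Nat.choose_succ_succ]
      rw [e4]

/-- Vandermonde-type convolution: for `l, l' ≥ 1`, `L = l + l'`, `L ≤ s`,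
`∑_{k=l}^{s-L+l} C(k-1, k-l) · C(s-k-1, s-k-l') = C(s-1, s-L)`. -/
theorem stmt_0 (l l' s L : ℕ) (hl : 1 ≤ l) (hl' : 1 ≤ l') (hL : L = l + l')
    (hLs : L ≤ s) :
    ∑ k ∈ Finset.Icc l (s - L + l),
        Nat.choose (k - 1) (k - l) * Nat.choose (s - k - 1) (s - k - l')
      = Nat.choose (s - 1) (s - L) := by
  set n := s - L with hn
  have hs : s = l + l' + n := by omega
  rw [← Finset.Ico_add_one_right_eq_Icc, Finset.sum_Ico_eq_sum_range]
  have hcard : s - L + l + 1 - l = n + 1 := by omega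
  rw [hcard]
  have key : ∀ i ∈ Finset.range (n + 1),
      Nat.choose (l + i - 1) (l + i - l) * Nat.choose (s - (l + i) - 1) (s - (l + i) - l')
        = Nat.choose ((l - 1) + i) i * Nat.choose ((l' - 1) + (n - i)) (n - i) := by
    intro i hi
    rw [Finset.mem_range] at hi
    congr 2 <;> omega
  rw [Finset.sum_congr rfl key, aux_conv n (l - 1) (l' - 1)]
  congr 1 <;> omega
end

section
/- Let p be a prime, k ≥ 1 an integer, and (s_d, ..., s_1) a tuple of positive integers. Then in ℚ (equivalently in ℚ_p), the multiple harmonic sum with upper bound p^k satisfies the reflection identity: H_{p^k}(s_d, ..., s_1) = (-1)^{s_1+...+s_d} * ∑_{l_d,...,l_1 ≥ 0} (∏_{i=1}^{d} C(l_i + s_i - 1, l_i) * (p^k)^{l_i}) * H_{p^k}(s_1 + l_1, ..., s_d + l_d), where the right-hand side is a convergent series in ℚ_p (only finitely many terms are nonzero for each p-adic valuation, and the series converges p-adically). -/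
/-!
Reflecting `n ↦ p^k - n` turns `H_{p^k}(s)` into `∑ 1/(p^k - n)^s`. For `0 < n < p^k` the ratio
`p^k/n` has `p`-adic norm `< 1`, so `(-1)^s/(p^k - n)^s = 1/(n - p^k)^s` is the sum of the negative
binomial series `∑ C(l+s-1, l) p^{kl}/n^{s+l}` in `ℚ_p`; summing these finitely many series over
`n` gives the identity.
-/

theorem Padic.norm_prime_pow_div_natCast_lt_one {p : ℕ} [Fact p.Prime] {k n : ℕ}
    (hn : ¬ p ^ k ∣ n) : ‖(p : ℚ_[p]) ^ k / n‖ < 1 := by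
  have hpk : ‖(p : ℚ_[p]) ^ k‖ = (p : ℝ) ^ (-k : ℤ) := Padic.norm_p_pow k
  have hn' : (p : ℝ) ^ (-k : ℤ) < ‖(n : ℚ_[p])‖ := by
    rw [← Int.cast_natCast (R := ℚ_[p]), ← not_le, Padic.norm_int_le_pow_iff_dvd]
    exact_mod_cast hn
  rw [norm_div, div_lt_one (hpk ▸ norm_nonneg _ |>.trans_lt hn'), hpk]
  exact hn'

theorem hasSum_choose_mul_pow_div_pow {𝕜 : Type*} [NormedField 𝕜] [CompleteSpace 𝕜] {x y : 𝕜}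
    (hx : x ≠ 0) (hyx : ‖y / x‖ < 1) (s : ℕ) :
    HasSum (fun l ↦ ((l + s - 1).choose l : 𝕜) * y ^ l / x ^ (s + l)) (1 / (x - y) ^ s) := by
  rcases s with _ | m
  -- For `s = 0` the truncated `l - 1` makes every coefficient with `l ≥ 1` vanish.
  · convert hasSum_single (f := fun l ↦ ((l + 0 - 1).choose l : 𝕜) * y ^ l / x ^ (0 + l)) 0
      fun l hl ↦ by simp [Nat.choose_eq_zero_of_lt (Nat.sub_one_lt hl)] using 1
    simp
  · have hval : 1 / (x - y) ^ (m + 1) = 1 / x ^ (m + 1) * (1 / (1 - y / x) ^ (m + 1)) := by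
      rw [one_sub_div hx, div_pow]
      field_simp
    rw [hval]
    refine ((hasSum_choose_mul_geometric_of_norm_lt_one m hyx).mul_left _).congr_fun fun l ↦ ?_
    rw [← add_assoc, Nat.add_sub_cancel, Nat.choose_symm_add, pow_add, div_pow]
    field_simp

theorem Padic.hasSum_choose_mul_prime_pow_div_pow {p : ℕ} [Fact p.Prime] (k s : ℕ) {n : ℕ}
    (hn0 : 0 < n) (hn : n < p ^ k) :
    HasSum (fun l ↦ ((l + s - 1).choose l : ℚ_[p]) * (p : ℚ_[p]) ^ (k * l) / (n : ℚ_[p]) ^ (s + l))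
      ((-1) ^ s / ((p ^ k - n : ℕ) : ℚ_[p]) ^ s) := by
  have hsum := hasSum_choose_mul_pow_div_pow (Nat.cast_ne_zero.mpr hn0.ne')
    (norm_prime_pow_div_natCast_lt_one (Nat.not_dvd_of_pos_of_lt hn0 hn)) s
  simp only [← pow_mul] at hsum
  convert hsum using 1
  push_cast [Nat.cast_sub hn.le]
  rw [← neg_sub, neg_pow (_ - _), one_div, div_mul_cancel_left₀ (by simp)]

theorem stmt_5_general (p : ℕ) [hp : Fact p.Prime] (k : ℕ) (s : ℕ)
    (H : ℕ → ℕ → ℚ)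
    (hH : ∀ N a, H N a = ∑ n ∈ Finset.Ico 1 N, 1 / (n : ℚ) ^ a) :
    HasSum
      (fun l : ℕ =>
        (Nat.choose (l + s - 1) l : ℚ_[p]) * (p : ℚ_[p]) ^ (k * l) * ((H (p ^ k) (s + l) : ℚ) : ℚ_[p]))
      ((-1 : ℚ_[p]) ^ s * ((H (p ^ k) s : ℚ) : ℚ_[p])) := by
  have hreflect : ((H (p ^ k) s : ℚ) : ℚ_[p]) =
      ∑ n ∈ Finset.Ico 1 (p ^ k), 1 / ((p ^ k - n : ℕ) : ℚ_[p]) ^ s := by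
    rw [hH, Finset.sum_Ico_reflect (fun n ↦ 1 / (n : ℚ_[p]) ^ s) 1 (Nat.le_succ _)]
    simp
  have hterms := hasSum_sum fun n hn ↦ Padic.hasSum_choose_mul_prime_pow_div_pow (p := p) k s
    (Finset.mem_Ico.mp hn).1 (Finset.mem_Ico.mp hn).2
  rw [hreflect, Finset.mul_sum]
  simp only [← mul_one_div ((-1 : ℚ_[p]) ^ s)] at hterms
  refine hterms.congr_fun fun l ↦ ?_
  rw [hH]
  push_cast
  simp only [Finset.mul_sum, mul_one_div]

/-- Reflection identity for depth-one multiple harmonic sums, `p`-adically: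
for `p` prime, `k ≥ 1`, `s ≥ 1`, the series
`∑_{l≥0} C(l+s-1, l) p^{kl} H_{p^k}(s+l)` converges in `ℚ_p` with sum
`(-1)^s · H_{p^k}(s)`, where `H_N(s) = ∑_{0<n<N} 1/n^s ∈ ℚ`. -/
theorem stmt_5 (p : ℕ) [hp : Fact p.Prime] (k : ℕ) (hk : 1 ≤ k) (s : ℕ) (hs : 1 ≤ s)
    (H : ℕ → ℕ → ℚ)
    (hH : ∀ N a, H N a = ∑ n ∈ Finset.Ico 1 N, 1 / (n : ℚ) ^ a) :
    HasSum
      (fun l : ℕ =>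
        (Nat.choose (l + s - 1) l : ℚ_[p]) * (p : ℚ_[p]) ^ (k * l) * ((H (p ^ k) (s + l) : ℚ) : ℚ_[p]))
      ((-1 : ℚ_[p]) ^ s * ((H (p ^ k) s : ℚ) : ℚ_[p])) :=
  stmt_5_general p (hp := hp) k s H hH
end

section
/- Let R be a ℚ-algebra and let u be an element of the ring R⟨⟨e_0, e_1⟩⟩ of noncommutative formal power series in two variables. If u commutes with e_1, then u lies in the subring R⟨⟨e_1⟩⟩ of power series in e_1 alone. -/
/-- Convolution (concatenation) product on noncommutative formal power series in
two variables `e₀, e₁`, represented as coefficient functions on words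
`List (Fin 2) → R`. -/
def convMul {R : Type*} [Semiring R] (u v : List (Fin 2) → R) : List (Fin 2) → R :=
  fun w => ∑ i ∈ Finset.range (w.length + 1), u (w.take i) * v (w.drop i)

/-- The series `e₁` (indicator of the one-letter word `[1]`). -/
def e1Series {R : Type*} [Semiring R] : List (Fin 2) → R :=
  fun w => if w = [(1 : Fin 2)] then 1 else 0

lemma convMul_e1_right {R : Type*} [Semiring R] (u : List (Fin 2) → R)
    (w : List (Fin 2)) : convMul u e1Series (w ++ [(1 : Fin 2)]) = u w := by
  unfold convMul e1Series
  rw [Finset.sum_eq_single w.length]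
  · simp
  · intro i hi hne
    simp only [Finset.mem_range] at hi
    have h : (w ++ [(1:Fin 2)]).drop i ≠ [(1:Fin 2)] := by
      intro h
      have := congrArg List.length h
      simp [List.length_drop] at this
      omega
    simp [h]
  · intro h
    simp at h

lemma convMul_e1_left {R : Type*} [Semiring R] (u : List (Fin 2) → R)
    (a : Fin 2) (w : List (Fin 2)) :
    convMul e1Series u (a :: w) = if a = (1 : Fin 2) then u w else 0 := by
  unfold convMul e1Series
  rw [Finset.sum_eq_single 1]
  · by_cases ha : a = 1 <;> simp [ha]
  · intro i hi hne
    simp only [Finset.mem_range, List.length_cons] at hi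
    have h : ((a :: w).take i) ≠ [(1:Fin 2)] := by
      intro h
      have h2 := congrArg List.length h
      rw [List.length_take, List.length_cons, List.length_singleton] at h2
      omega
    simp [h]
  · intro h
    simp at h

/-- If `u ∈ R⟨⟨e₀,e₁⟩⟩` commutes with `e₁`, then `u` is a power series in `e₁`
alone, i.e. the coefficient of `u` at any word containing the letter `e₀`
vanishes. -/
theorem stmt_7 {R : Type*} [CommRing R] [Algebra ℚ R] (u : List (Fin 2) → R)
    (hcomm : convMul u e1Series = convMul e1Series u) :
    ∀ w : List (Fin 2), (0 : Fin 2) ∈ w → u w = 0 := by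
  have key : ∀ (a : Fin 2) (w : List (Fin 2)),
      u (a :: w) = if a = 1 then u (w ++ [1]) else 0 := by
    intro a w
    have h1 := convMul_e1_right u (a :: w)
    rw [show (a :: w) ++ [(1:Fin 2)] = a :: (w ++ [1]) from rfl, hcomm,
      convMul_e1_left] at h1
    exact h1.symm
  have main : ∀ (k : ℕ) (t : List (Fin 2)),
      u (List.replicate k (1:Fin 2) ++ (0:Fin 2) :: t) = 0 := by
    intro k
    induction k with
    | zero => intro t; simpa using key 0 t
    | succ k ih =>
      intro t
      rw [List.replicate_succ, List.cons_append, key]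
      have h : (List.replicate k (1:Fin 2) ++ (0:Fin 2) :: t) ++ [(1:Fin 2)]
             = List.replicate k (1:Fin 2) ++ (0:Fin 2) :: (t ++ [(1:Fin 2)]) := by
        simp
      simp only [if_pos rfl, h]
      exact ih (t ++ [1])
  intro w hw
  obtain ⟨k, t, rfl⟩ : ∃ k t, w = List.replicate k (1:Fin 2) ++ (0:Fin 2) :: t := by
    clear hcomm key main
    induction w with
    | nil => simp at hw
    | cons a v ih =>
      by_cases ha : a = 0
      · exact ⟨0, v, by simp [ha]⟩
      · have ha1 : a = 1 := by omega
        have hv : (0:Fin 2) ∈ v := by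
          rcases List.mem_cons.mp hw with h | h
          · exact absurd h.symm ha
          · exact h
        obtain ⟨k, t, rfl⟩ := ih hv
        exact ⟨k+1, t, by simp [List.replicate_succ, ha1]⟩
  exact main k t
end

section
/- Let f be a grouplike element of R⟨⟨e_0,e_1⟩⟩ (Δ_⧢(f) = f ⊗ f, f[∅] = 1) for a ℚ-algebra R. Then h = f^{-1} e_1 f is a Lie series (primitive for Δ_⧢). Conversely, if f ∈ R⟨⟨e_0,e_1⟩⟩ with f[∅] = 1 and f[e_1^n] = 0 for all n ≥ 1, and f^{-1} e_1 f is primitive, then f is grouplike. -/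
/-- The multiset of shuffles of two words. -/
def shuffles : List (Fin 2) → List (Fin 2) → Multiset (List (Fin 2))
  | [], ys => {ys}
  | x :: xs, [] => {x :: xs}
  | x :: xs, y :: ys =>
      (shuffles xs (y :: ys)).map (x :: ·) + (shuffles (x :: xs) ys).map (y :: ·)
termination_by a b => a.length + b.length

/-- The unit series `1`. -/
def oneSeries {R : Type*} [Semiring R] : List (Fin 2) → R :=
  fun w => if w = [] then 1 else 0

/-- `f` is grouplike for the shuffle coproduct: `f[∅] = 1` and
`f[w₁ ⧢ w₂] = f[w₁]·f[w₂]`. -/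
def IsGrouplike {R : Type*} [CommRing R] (f : List (Fin 2) → R) : Prop :=
  f [] = 1 ∧ ∀ w₁ w₂ : List (Fin 2), ((shuffles w₁ w₂).map f).sum = f w₁ * f w₂

/-- `h` is a Lie series (primitive for the shuffle coproduct). -/
def IsPrimitive {R : Type*} [CommRing R] (h : List (Fin 2) → R) : Prop :=
  h [] = 0 ∧ ∀ w₁ w₂ : List (Fin 2), w₁ ≠ [] → w₂ ≠ [] →
    ((shuffles w₁ w₂).map h).sum = 0

/-!
Words over `Fin 2` are words in `e₀ = 0` and `e₁ = 1`. The shuffle coproduct is a ring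
homomorphism because deconcatenating a shuffle is the same as shuffling two deconcatenations
(`shuffles_bind_splits`). Hence if `Δ⧢ f = f ⊗ f` then `Δ⧢ f⁻¹ = f⁻¹ ⊗ f⁻¹`, and conjugating
`Δ⧢ e₁ = e₁ ⊗ 1 + 1 ⊗ e₁` gives `Δ⧢ h = h ⊗ 1 + 1 ⊗ h`.

Conversely, primitivity of `h` says exactly that `U = Δ⧢ f · (f⁻¹ ⊗ f⁻¹)` commutes with
`Δ⧢ e₁`. Comparing coefficients, the coefficient of `e₁a ⊗ b` in `U` equals that of `ae₁ ⊗ b`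
and that of `e₀a ⊗ b` vanishes, up to coefficients at `a' ⊗ b'` with `b'` shorter than `b`.
Rotating the leading `e₁`'s of a word containing `e₀` to its end thus shows, by induction on the
length of `b`, that `U` is supported on `R⟨⟨e₁⟩⟩ ⊗ R⟨⟨e₁⟩⟩`. Since `Δ⧢ f = U · (f ⊗ f)` and `f`
agrees with `1` on powers of `e₁`, the coefficients of `U` at `e₁ᵐ ⊗ e₁ⁿ` are those of `Δ⧢ f`,
which are those of `1`. Hence `U = 1`, that is `Δ⧢ f = f ⊗ f`.
-/

section convMul

variable {M : Type*} [Semiring M]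

theorem convMul_nil (u v : List (Fin 2) → M) : convMul u v [] = u [] * v [] := by
  simp [convMul]

theorem convMul_cons (u v : List (Fin 2) → M) (x : Fin 2) (w : List (Fin 2)) :
    convMul u v (x :: w) = u [] * v (x :: w) + convMul (fun s => u (x :: s)) v w := by
  rw [convMul, List.length_cons, Finset.sum_range_succ', add_comm]
  simp [convMul]

def constSeries (c : M) : List (Fin 2) → M := fun w => if w = [] then c else 0

theorem oneSeries_eq_constSeries : (oneSeries : List (Fin 2) → M) = constSeries 1 := rfl

theorem convMul_constSeries (u : List (Fin 2) → M) (c : M) :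
    convMul u (constSeries c) = fun w => u w * c := by
  funext w
  induction w generalizing u with
  | nil => simp [convMul_nil, constSeries]
  | cons x w ih => simp [convMul_cons, ih, constSeries]

theorem constSeries_convMul (c : M) (u : List (Fin 2) → M) :
    convMul (constSeries c) u = fun w => c * u w := by
  funext w
  cases w with
  | nil => simp [convMul_nil, constSeries]
  | cons x w => simp [constSeries, convMul]

theorem convMul_oneSeries (u : List (Fin 2) → M) : convMul u oneSeries = u := by
  simp [oneSeries_eq_constSeries, convMul_constSeries]

theorem oneSeries_convMul (u : List (Fin 2) → M) : convMul oneSeries u = u := by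
  simp [oneSeries_eq_constSeries, constSeries_convMul]

theorem zero_convMul (u : List (Fin 2) → M) : convMul 0 u = 0 := by
  funext w; simp [convMul]

theorem convMul_zero (u : List (Fin 2) → M) : convMul u 0 = 0 := by
  funext w; simp [convMul]

theorem add_convMul (u u' v : List (Fin 2) → M) :
    convMul (u + u') v = convMul u v + convMul u' v := by
  funext w; simp [convMul, add_mul, Finset.sum_add_distrib]

theorem convMul_add (u v v' : List (Fin 2) → M) :
    convMul u (v + v') = convMul u v + convMul u v' := by
  funext w; simp [convMul, mul_add, Finset.sum_add_distrib]

theorem const_mul_convMul (c : M) (u v : List (Fin 2) → M) :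
    convMul (fun s => c * u s) v = fun w => c * convMul u v w := by
  funext w; simp [convMul, mul_assoc, Finset.mul_sum]

theorem convMul_assoc (u v w : List (Fin 2) → M) :
    convMul (convMul u v) w = convMul u (convMul v w) := by
  funext t
  induction t generalizing u with
  | nil => simp [convMul_nil, mul_assoc]
  | cons x t ih =>
    have hshift : (fun s => convMul u v (x :: s))
        = (fun s => u [] * v (x :: s)) + convMul (fun s => u (x :: s)) v := by
      funext s; simp [convMul_cons]
    rw [convMul_cons, convMul_cons, convMul_nil, hshift, add_convMul, Pi.add_apply,
      const_mul_convMul, ih, convMul_cons v w, mul_add, mul_assoc, add_assoc]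

end convMul

def splits : List (Fin 2) → Multiset (List (Fin 2) × List (Fin 2))
  | [] => {([], [])}
  | x :: xs => ([], x :: xs) ::ₘ (splits xs).map fun p => (x :: p.1, p.2)

theorem convMul_eq_sum_splits {M : Type*} [Semiring M] (u v : List (Fin 2) → M)
    (w : List (Fin 2)) : convMul u v w = ((splits w).map fun p => u p.1 * v p.2).sum := by
  induction w generalizing u with
  | nil => simp [convMul_nil, splits]
  | cons x w ih => simp [convMul_cons, ih, splits, Multiset.map_map]

theorem shuffles_nil_left (w : List (Fin 2)) : shuffles [] w = {w} := by
  simp [shuffles]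

theorem shuffles_nil_right (w : List (Fin 2)) : shuffles w [] = {w} := by
  cases w <;> simp [shuffles]

theorem perm_append_of_mem_shuffles :
    ∀ {a b s : List (Fin 2)}, s ∈ shuffles a b → s.Perm (a ++ b)
  | [], b, s, hs => by simp_all [shuffles_nil_left]
  | x :: xs, [], s, hs => by simp_all [shuffles_nil_right]
  | x :: xs, y :: ys, s, hs => by
    rw [shuffles, Multiset.mem_add, Multiset.mem_map, Multiset.mem_map] at hs
    rcases hs with ⟨t, ht, rfl⟩ | ⟨t, ht, rfl⟩
    · exact (perm_append_of_mem_shuffles ht).cons x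
    · exact ((perm_append_of_mem_shuffles ht).cons y).trans List.perm_middle.symm
termination_by a b => a.length + b.length

theorem shuffles_bind_splits : ∀ a b : List (Fin 2), (shuffles a b).bind splits =
    (splits a).bind fun p => (splits b).bind fun q => shuffles p.1 q.1 ×ˢ shuffles p.2 q.2
  | [], b => by
    simpa [shuffles_nil_left, splits, SProd.sprod, Multiset.product] using
      (Multiset.bind_singleton (splits b) id).symm
  | x :: xs, [] => by
    simpa [shuffles_nil_right, splits, SProd.sprod, Multiset.product] using
      (Multiset.bind_singleton (splits (x :: xs)) id).symm
  | x :: xs, y :: ys => by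
    have IH1 := shuffles_bind_splits xs (y :: ys)
    have IH2 := shuffles_bind_splits (x :: xs) ys
    simp only [SProd.sprod, Multiset.product] at IH1 IH2 ⊢
    rw [shuffles, Multiset.add_bind]
    simp only [Multiset.bind_map, splits, Multiset.bind_cons]
    rw [← Multiset.map_bind, ← Multiset.map_bind, IH1, IH2]
    simp only [shuffles, splits, Multiset.add_bind, Multiset.cons_bind, Multiset.bind_map,
      Multiset.map_bind, Multiset.singleton_bind, Multiset.bind_add, Multiset.map_add,
      Multiset.map_map, Function.comp, shuffles_nil_right, shuffles_nil_left]
    abel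
termination_by a b => a.length + b.length

theorem length_of_mem_shuffles {a b s : List (Fin 2)} (hs : s ∈ shuffles a b) :
    s.length = a.length + b.length := by
  rw [(perm_append_of_mem_shuffles hs).length_eq, List.length_append]

theorem exists_eq_replicate_one_append_zero_cons {w : List (Fin 2)} (hw : (0 : Fin 2) ∈ w) :
    ∃ k c, w = List.replicate k 1 ++ 0 :: c := by
  induction w with
  | nil => simp at hw
  | cons z w ih =>
    by_cases hz : z = 0
    · exact ⟨0, w, by simp [hz]⟩
    · obtain ⟨k, c, rfl⟩ := ih (by simpa [Ne.symm hz] using hw)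
      exact ⟨k + 1, c, by simp [Fin.eq_one_of_ne_zero z hz, List.replicate_succ]⟩

theorem eq_replicate_one_of_zero_notMem {w : List (Fin 2)} (hw : (0 : Fin 2) ∉ w) :
    w = List.replicate w.length 1 :=
  List.eq_replicate_of_mem fun z hz => Fin.eq_one_of_ne_zero z (ne_of_mem_of_not_mem hz hw)

/-- Writing `w = 1ᵏ 0 c`, `k` rotations bring `w` to a word starting with `0`. -/
theorem eq_zero_of_mem_of_rotate {N : Type*} [Zero N] {v : List (Fin 2) → N}
    (hv : ∀ z c, (0 : Fin 2) ∈ z :: c → v (z :: c) = if z = 1 then v (c ++ [1]) else 0)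
    {w : List (Fin 2)} (hw : (0 : Fin 2) ∈ w) : v w = 0 := by
  obtain ⟨k, c, rfl⟩ := exists_eq_replicate_one_append_zero_cons hw
  induction k generalizing c with
  | zero => simpa using hv 0 c (by simp)
  | succ k ih =>
    rw [List.replicate_succ, List.cons_append, hv 1 _ (by simp), if_pos rfl, List.append_assoc,
      List.cons_append]
    exact ih (c ++ [1]) (by simp)

theorem Commute.mul_of_conj_eq {G : Type*} [Monoid G] {x x' y y' e : G} (hx : x * x' = 1)
    (hy : y * y' = 1) (h : x' * e * x = y' * e * y) : Commute (x * y') e :=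
  calc x * y' * e = x * (y' * e * y) * y' := by simp only [mul_assoc, hy, mul_one]
    _ = x * (x' * e * x) * y' := by rw [h]
    _ = e * (x * y') := by simp only [← mul_assoc, hx, one_mul]

/-- `NCSeries M` is `M⟨⟨e₀, e₁⟩⟩`, and `NCSeries (NCSeries M)` plays the role of the completed
tensor square: `coeff b (coeff a X)` is the coefficient of `a ⊗ b` in `X`. -/
def NCSeries (M : Type*) := List (Fin 2) → M

namespace NCSeries

section Semiring

variable {M : Type*} [Semiring M]

instance : AddCommMonoid (NCSeries M) := Pi.addCommMonoid

instance : Semiring (NCSeries M) where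
  mul := convMul
  one := oneSeries
  mul_assoc := convMul_assoc
  one_mul := oneSeries_convMul
  mul_one := convMul_oneSeries
  zero_mul := zero_convMul
  mul_zero := convMul_zero
  left_distrib := convMul_add
  right_distrib := add_convMul

def coeff (w : List (Fin 2)) : NCSeries M →+ M where
  toFun u := u w
  map_zero' := rfl
  map_add' _ _ := rfl

@[ext]
theorem ext {u v : NCSeries M} (h : ∀ w, coeff w u = coeff w v) : u = v := funext h

def C (c : M) : NCSeries M := constSeries c

def e1 : NCSeries M := e1Series

theorem coeff_one (w : List (Fin 2)) : coeff w (1 : NCSeries M) = if w = [] then 1 else 0 := rfl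

theorem coeff_C (c : M) (w : List (Fin 2)) : coeff w (C c) = if w = [] then c else 0 := rfl

theorem coeff_e1 (w : List (Fin 2)) : coeff w (e1 : NCSeries M) = if w = [1] then 1 else 0 := rfl

theorem coeff_mul (u v : NCSeries M) (w : List (Fin 2)) :
    coeff w (u * v) =
      ∑ i ∈ Finset.range (w.length + 1), coeff (w.take i) u * coeff (w.drop i) v := rfl

theorem coeff_mul_eq_sum_splits (u v : NCSeries M) (w : List (Fin 2)) :
    coeff w (u * v) = ((splits w).map fun p => coeff p.1 u * coeff p.2 v).sum :=
  convMul_eq_sum_splits u v w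

theorem coeff_mul_C (u : NCSeries M) (c : M) (w : List (Fin 2)) :
    coeff w (u * C c) = coeff w u * c :=
  congrFun (convMul_constSeries u c) w

theorem coeff_C_mul (c : M) (u : NCSeries M) (w : List (Fin 2)) :
    coeff w (C c * u) = c * coeff w u :=
  congrFun (constSeries_convMul c u) w

theorem coeff_mul_e1_nil (u : NCSeries M) : coeff [] (u * e1) = 0 := by
  simp [coeff_mul, coeff_e1]

theorem coeff_mul_e1_append (u : NCSeries M) (w : List (Fin 2)) (x : Fin 2) :
    coeff (w ++ [x]) (u * e1) = if x = 1 then coeff w u else 0 := by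
  rw [coeff_mul, Finset.sum_eq_single w.length]
  · simp [coeff_e1]
  · intro i hi hne
    have : (List.drop i (w ++ [x])).length ≠ 1 := by
      simp only [Finset.mem_range, List.length_append, List.length_singleton] at hi
      simp only [List.length_drop, List.length_append, List.length_singleton]
      omega
    rw [coeff_e1, if_neg fun h => this (by rw [h]; rfl), mul_zero]
  · simp

theorem coeff_e1_mul_nil (u : NCSeries M) : coeff [] (e1 * u) = 0 := by
  simp [coeff_mul, coeff_e1]

theorem coeff_e1_mul_cons (u : NCSeries M) (x : Fin 2) (w : List (Fin 2)) :
    coeff (x :: w) (e1 * u) = if x = 1 then coeff w u else 0 := by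
  rw [coeff_mul, Finset.sum_eq_single 1]
  · simp [coeff_e1]
  · intro i hi hne
    have : (List.take i (x :: w)).length ≠ 1 := by
      simp only [Finset.mem_range, List.length_cons] at hi
      simp only [List.length_take, List.length_cons]
      omega
    rw [coeff_e1, if_neg fun h => this (by rw [h]; rfl), zero_mul]
  · simp

theorem coeff_coeff_mul (X Y : NCSeries (NCSeries M)) (a b : List (Fin 2)) :
    coeff b (coeff a (X * Y)) = ((splits a).map fun p =>
      ((splits b).map fun q => coeff q.1 (coeff p.1 X) * coeff q.2 (coeff p.2 Y)).sum).sum := by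
  rw [coeff_mul_eq_sum_splits, map_multiset_sum, Multiset.map_map]
  exact congrArg _ (Multiset.map_congr rfl fun p _ => coeff_mul_eq_sum_splits _ _ b)

/-- The shuffle coproduct `Δ⧢`. -/
def comul (u : NCSeries M) : NCSeries (NCSeries M) := fun a b => ((shuffles a b).map u).sum

def tmul (u v : NCSeries M) : NCSeries (NCSeries M) := fun a b => u a * v b

theorem coeff_coeff_comul (u : NCSeries M) (a b : List (Fin 2)) :
    coeff b (coeff a (comul u)) = ((shuffles a b).map fun s => coeff s u).sum := rfl

theorem coeff_coeff_tmul (u v : NCSeries M) (a b : List (Fin 2)) :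
    coeff b (coeff a (tmul u v)) = coeff a u * coeff b v := rfl

theorem comul_mul (u v : NCSeries M) : comul (u * v) = comul u * comul v := by
  ext a b
  rw [coeff_coeff_mul]
  simp only [coeff_coeff_comul, coeff_mul_eq_sum_splits]
  rw [← Multiset.sum_bind, ← Multiset.map_bind, shuffles_bind_splits]
  simp only [Multiset.map_bind, Multiset.sum_bind, SProd.sprod, Multiset.product,
    Multiset.map_map, Function.comp_def]
  simp only [Multiset.sum_map_mul_left, Multiset.sum_map_mul_right]

theorem comul_one : comul (1 : NCSeries M) = 1 := by
  ext a b
  rw [coeff_coeff_comul, coeff_one, apply_ite (coeff b), coeff_one, map_zero]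
  rcases eq_or_ne a [] with rfl | ha
  · simp [shuffles_nil_left, coeff_one]
  refine (Multiset.sum_eq_zero fun x hx => ?_).trans (if_neg ha).symm
  obtain ⟨s, hs, rfl⟩ := Multiset.mem_map.1 hx
  have : s ≠ [] := by
    rw [← List.length_pos_iff, length_of_mem_shuffles hs]
    exact Nat.add_pos_left (List.length_pos_iff.2 ha) _
  rw [coeff_one, if_neg this]

theorem comul_e1 : comul (e1 : NCSeries M) = tmul e1 1 + tmul 1 e1 := by
  ext a b
  simp only [map_add, coeff_coeff_tmul, coeff_coeff_comul, coeff_one, coeff_e1]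
  rcases eq_or_ne a [] with rfl | ha
  · simp [shuffles_nil_left]
  rcases eq_or_ne b [] with rfl | hb
  · simp [shuffles_nil_right]
  refine (Multiset.sum_eq_zero fun x hx => ?_).trans (by simp [ha, hb])
  obtain ⟨s, hs, rfl⟩ := Multiset.mem_map.1 hx
  have : s ≠ [1] := by
    intro h
    have hlen := length_of_mem_shuffles hs
    rw [h, List.length_singleton] at hlen
    have := List.length_pos_iff.2 ha
    have := List.length_pos_iff.2 hb
    omega
  simp [this]

theorem tmul_e1_one : tmul (e1 : NCSeries M) 1 = e1 := by
  ext a b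
  by_cases ha : a = [1] <;> simp [coeff_coeff_tmul, coeff_e1, ha, coeff_one]

theorem tmul_one_left (v : NCSeries M) : tmul 1 v = C v := by
  ext a b
  by_cases ha : a = [] <;> simp [coeff_coeff_tmul, coeff_C, ha, coeff_one]

theorem map_coeff_mul_e1_eq_zero {N : Type*} [AddZeroClass N] (φ : M →+ N) {u : NCSeries M}
    {w : List (Fin 2)} (h : ∀ w', w'.length < w.length → φ (coeff w' u) = 0) :
    φ (coeff w (u * e1)) = 0 := by
  rcases List.eq_nil_or_concat w with rfl | ⟨w', x, rfl⟩
  · rw [coeff_mul_e1_nil, map_zero]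
  · rw [List.concat_eq_append, coeff_mul_e1_append]
    split_ifs
    · exact h w' (by simp)
    · exact map_zero φ

theorem map_coeff_e1_mul_eq_zero {N : Type*} [AddZeroClass N] (φ : M →+ N) {u : NCSeries M}
    {w : List (Fin 2)} (h : ∀ w', w'.length < w.length → φ (coeff w' u) = 0) :
    φ (coeff w (e1 * u)) = 0 := by
  cases w with
  | nil => rw [coeff_e1_mul_nil, map_zero]
  | cons x w' =>
    rw [coeff_e1_mul_cons]
    split_ifs
    · exact h w' (by simp)
    · exact map_zero φ

theorem coeff_coeff_mul_comul_e1 (U : NCSeries (NCSeries M)) (a b : List (Fin 2)) :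
    coeff b (coeff a (U * comul e1)) = coeff b (coeff a (U * e1)) + coeff b (coeff a U * e1) := by
  rw [comul_e1, tmul_e1_one, tmul_one_left, mul_add, map_add, map_add, coeff_mul_C]

theorem coeff_coeff_comul_e1_mul (U : NCSeries (NCSeries M)) (a b : List (Fin 2)) :
    coeff b (coeff a (comul e1 * U)) = coeff b (coeff a (e1 * U)) + coeff b (e1 * coeff a U) := by
  rw [comul_e1, tmul_e1_one, tmul_one_left, add_mul, map_add, map_add, coeff_C_mul]

section Commute

variable {U : NCSeries (NCSeries M)} (hU : Commute U (comul e1))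
include hU

theorem coeff_coeff_eq_zero_of_commute_of_mem_left {a b : List (Fin 2)}
    (ha : (0 : Fin 2) ∈ a) : coeff b (coeff a U) = 0 := by
  induction hn : b.length using Nat.strong_induction_on generalizing a b with
  | _ n ih =>
  subst hn
  refine eq_zero_of_mem_of_rotate (v := fun a => coeff b (coeff a U)) (fun z c hzc => ?_) ha
  have hmem : (0 : Fin 2) ∈ z :: c ++ [1] := List.mem_append_left _ hzc
  have h₁ : coeff b (coeff (z :: c ++ [1]) U * e1) = 0 :=
    map_coeff_mul_e1_eq_zero (AddMonoidHom.id M) fun b' hb' => ih _ hb' hmem rfl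
  have h₂ : coeff b (e1 * coeff (z :: c ++ [1]) U) = 0 :=
    map_coeff_e1_mul_eq_zero (AddMonoidHom.id M) fun b' hb' => ih _ hb' hmem rfl
  have hU' : coeff b (coeff (z :: c ++ [1]) (U * comul e1)) =
      coeff b (coeff (z :: c ++ [1]) (comul e1 * U)) := by rw [hU.eq]
  rwa [coeff_coeff_mul_comul_e1, coeff_coeff_comul_e1_mul, h₁, h₂, add_zero, add_zero,
    coeff_mul_e1_append, if_pos rfl, List.cons_append, coeff_e1_mul_cons, apply_ite (coeff b),
    map_zero] at hU'

theorem coeff_coeff_eq_zero_of_commute_of_mem_right {a b : List (Fin 2)}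
    (hb : (0 : Fin 2) ∈ b) : coeff b (coeff a U) = 0 := by
  induction hn : a.length using Nat.strong_induction_on generalizing a b with
  | _ n ih =>
  subst hn
  refine eq_zero_of_mem_of_rotate (v := fun b => coeff b (coeff a U)) (fun z c hzc => ?_) hb
  have hmem : (0 : Fin 2) ∈ z :: c ++ [1] := List.mem_append_left _ hzc
  have h₁ : coeff (z :: c ++ [1]) (coeff a (U * e1)) = 0 :=
    map_coeff_mul_e1_eq_zero (coeff _) fun a' ha' => ih _ ha' hmem rfl
  have h₂ : coeff (z :: c ++ [1]) (coeff a (e1 * U)) = 0 :=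
    map_coeff_e1_mul_eq_zero (coeff _) fun a' ha' => ih _ ha' hmem rfl
  have hU' : coeff (z :: c ++ [1]) (coeff a (U * comul e1)) =
      coeff (z :: c ++ [1]) (coeff a (comul e1 * U)) := by rw [hU.eq]
  rwa [coeff_coeff_mul_comul_e1, coeff_coeff_comul_e1_mul, h₁, h₂, zero_add, zero_add,
    coeff_mul_e1_append, if_pos rfl, List.cons_append, coeff_e1_mul_cons] at hU'

theorem coeff_coeff_eq_zero_of_commute {a b : List (Fin 2)}
    (h : (0 : Fin 2) ∈ a ∨ (0 : Fin 2) ∈ b) : coeff b (coeff a U) = 0 :=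
  h.elim (coeff_coeff_eq_zero_of_commute_of_mem_left hU)
    (coeff_coeff_eq_zero_of_commute_of_mem_right hU)

end Commute

theorem eq_one_of_commute_comul_e1 {U : NCSeries (NCSeries M)} (hU : Commute U (comul e1))
    (h : ∀ m n, coeff (List.replicate n 1) (coeff (List.replicate m 1) U) =
      coeff (List.replicate n 1) (coeff (List.replicate m 1) 1)) : U = 1 := by
  ext a b
  by_cases h0 : (0 : Fin 2) ∈ a ∨ (0 : Fin 2) ∈ b
  · rw [coeff_coeff_eq_zero_of_commute hU h0, coeff_one, apply_ite (coeff b), coeff_one, map_zero]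
    rcases h0 with h0 | h0 <;> simp [List.ne_nil_of_mem h0]
  · rw [not_or] at h0
    rw [eq_replicate_one_of_zero_notMem h0.1, eq_replicate_one_of_zero_notMem h0.2]
    exact h _ _

theorem coeff_replicate_mul {u v : NCSeries M}
    (hv : ∀ n, coeff (List.replicate n 1) v = coeff (List.replicate n 1) 1) (n : ℕ) :
    coeff (List.replicate n 1) (u * v) = coeff (List.replicate n 1) u := by
  conv_rhs => rw [← mul_one u]
  simp only [coeff_mul, List.drop_replicate, hv]

theorem coeff_coeff_comul_replicate {u : NCSeries M}
    (hu : ∀ n, coeff (List.replicate n 1) u = coeff (List.replicate n 1) 1) (m n : ℕ) :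
    coeff (List.replicate n 1) (coeff (List.replicate m 1) (comul u)) =
      coeff (List.replicate n 1) (coeff (List.replicate m 1) 1) := by
  rw [← comul_one, coeff_coeff_comul, coeff_coeff_comul]
  refine congrArg _ (Multiset.map_congr rfl fun s hs => ?_)
  have hperm := perm_append_of_mem_shuffles hs
  rw [← List.replicate_add] at hperm
  rw [List.perm_replicate.1 hperm, hu]

end Semiring

section CommSemiring

variable {M : Type*} [CommSemiring M]

theorem tmul_mul_tmul (u v u' v' : NCSeries M) :
    tmul u v * tmul u' v' = tmul (u * u') (v * v') := by
  ext a b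
  rw [coeff_coeff_mul]
  simp only [coeff_coeff_tmul, coeff_mul_eq_sum_splits]
  rw [← Multiset.sum_map_mul_right]
  refine congrArg _ (Multiset.map_congr rfl fun p _ => ?_)
  rw [← Multiset.sum_map_mul_left]
  exact congrArg _ (Multiset.map_congr rfl fun q _ => mul_mul_mul_comm _ _ _ _)

theorem tmul_one_one : tmul (1 : NCSeries M) 1 = 1 := by
  rw [tmul_one_left]; rfl

theorem coeff_coeff_replicate_mul_tmul (U : NCSeries (NCSeries M)) {f : NCSeries M}
    (hf : ∀ n, coeff (List.replicate n 1) f = coeff (List.replicate n 1) 1) (m n : ℕ) :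
    coeff (List.replicate n 1) (coeff (List.replicate m 1) (U * tmul f f)) =
      coeff (List.replicate n 1) (coeff (List.replicate m 1) U) := by
  have hf1 : ∀ k, coeff (List.replicate k 1) (tmul f 1) = coeff (List.replicate k 1) 1 := by
    intro k; ext b
    rw [coeff_coeff_tmul, hf, ← tmul_one_one, coeff_coeff_tmul]
  have hsplit : tmul f f = tmul f 1 * C f := by
    rw [← tmul_one_left, tmul_mul_tmul, mul_one, one_mul]
  rw [hsplit, ← mul_assoc, coeff_mul_C, coeff_replicate_mul hf, coeff_replicate_mul hf1]

theorem tmul_mul_comul_e1_mul_tmul {f g : NCSeries M} (hgf : g * f = 1) :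
    tmul g g * comul e1 * tmul f f = tmul (g * e1 * f) 1 + tmul 1 (g * e1 * f) := by
  simp only [comul_e1, mul_add, add_mul, tmul_mul_tmul, mul_one, hgf]

theorem comul_conj_e1_of_comul_eq_tmul {f g : NCSeries M} (hfg : f * g = 1) (hgf : g * f = 1)
    (hf : comul f = tmul f f) :
    comul (g * e1 * f) = tmul (g * e1 * f) 1 + tmul 1 (g * e1 * f) := by
  have hg : comul g = tmul g g := left_inv_eq_right_inv (a := comul f)
    (by rw [← comul_mul, hgf, comul_one]) (by rw [hf, tmul_mul_tmul, hfg, tmul_one_one])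
  rw [comul_mul, comul_mul, hg, hf, tmul_mul_comul_e1_mul_tmul hgf]

theorem comul_eq_tmul_of_comul_conj_e1 {f g : NCSeries M} (hfg : f * g = 1) (hgf : g * f = 1)
    (hf : ∀ n, coeff (List.replicate n 1) f = coeff (List.replicate n 1) 1)
    (hh : comul (g * e1 * f) = tmul (g * e1 * f) 1 + tmul 1 (g * e1 * f)) :
    comul f = tmul f f := by
  have hfactor : comul f = comul f * tmul g g * tmul f f := by
    rw [mul_assoc, tmul_mul_tmul, hgf, tmul_one_one, mul_one]
  have hcomm : Commute (comul f * tmul g g) (comul e1) :=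
    Commute.mul_of_conj_eq (x' := comul g) (y := tmul f f)
      (by rw [← comul_mul, hfg, comul_one]) (by rw [tmul_mul_tmul, hfg, tmul_one_one])
      (by rw [← comul_mul, ← comul_mul, hh, tmul_mul_comul_e1_mul_tmul hgf])
  rw [hfactor, eq_one_of_commute_comul_e1 hcomm fun m n => ?_, one_mul]
  rw [← coeff_coeff_replicate_mul_tmul _ hf, ← hfactor, coeff_coeff_comul_replicate hf]

end CommSemiring

section CommRing

variable {R : Type*} [CommRing R]

theorem isGrouplike_iff (f : NCSeries R) : IsGrouplike f ↔ coeff [] f = 1 ∧ comul f = tmul f f :=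
  and_congr Iff.rfl ⟨fun h => ext fun a => ext fun b => h a b,
    fun h a b => congrArg (fun X => coeff b (coeff a X)) h⟩

theorem isPrimitive_iff (h : NCSeries R) : IsPrimitive h ↔ comul h = tmul h 1 + tmul 1 h := by
  change coeff [] h = 0 ∧ (∀ a b, a ≠ [] → b ≠ [] → coeff b (coeff a (comul h)) = 0) ↔ _
  have hcoeff : ∀ a b, coeff b (coeff a (tmul h 1 + tmul 1 h)) =
      coeff a h * coeff b 1 + coeff a 1 * coeff b h := fun a b => rfl
  constructor
  · rintro ⟨h0, hprim⟩
    ext a b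
    rw [hcoeff]
    rcases eq_or_ne a [] with rfl | ha
    · rw [coeff_coeff_comul, shuffles_nil_left]
      by_cases hb : b = [] <;> simp [coeff_one, h0, hb]
    rcases eq_or_ne b [] with rfl | hb
    · rw [coeff_coeff_comul, shuffles_nil_right]
      simp [coeff_one, ha]
    simpa [coeff_one, ha, hb] using hprim a b ha hb
  · intro hcomul
    have h0 := congrArg (fun X => coeff [] (coeff [] X)) hcomul
    simp only [hcoeff, coeff_coeff_comul, shuffles_nil_left, coeff_one] at h0
    simp only [hcomul, hcoeff, coeff_one]
    exact ⟨by simpa using h0, fun a b ha hb => by simp [ha, hb]⟩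

end CommRing

end NCSeries

theorem stmt_17_general {R : Type*} [CommRing R]
    (f g : List (Fin 2) → R) (hf1 : f [] = 1)
    (hinv₁ : convMul f g = oneSeries) (hinv₂ : convMul g f = oneSeries) :
    (IsGrouplike f → IsPrimitive (convMul (convMul g e1Series) f)) ∧
      ((∀ n : ℕ, 1 ≤ n → f (List.replicate n (1 : Fin 2)) = 0) →
        IsPrimitive (convMul (convMul g e1Series) f) → IsGrouplike f) := by
  let F : NCSeries R := f
  let G : NCSeries R := g
  have hFG : F * G = 1 := hinv₁
  have hGF : G * F = 1 := hinv₂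
  have hpow (hf : ∀ n : ℕ, 1 ≤ n → f (List.replicate n 1) = 0) (n : ℕ) :
      NCSeries.coeff (List.replicate n 1) F = NCSeries.coeff (List.replicate n 1) 1 := by
    cases n with
    | zero => exact hf1
    | succ n => exact hf (n + 1) (by omega)
  refine ⟨fun hF => (NCSeries.isPrimitive_iff (G * NCSeries.e1 * F)).2 ?_,
    fun hf hh => (NCSeries.isGrouplike_iff F).2 ⟨hf1, ?_⟩⟩
  · exact NCSeries.comul_conj_e1_of_comul_eq_tmul hFG hGF ((NCSeries.isGrouplike_iff F).1 hF).2
  · exact NCSeries.comul_eq_tmul_of_comul_conj_e1 hFG hGF (hpow hf)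
      ((NCSeries.isPrimitive_iff _).1 hh)

/-- If `f` is grouplike then `h = f⁻¹ e₁ f` is a Lie series; conversely, if
`f[∅] = 1`, `f[e₁ⁿ] = 0` for all `n ≥ 1`, and `f⁻¹ e₁ f` is a Lie series,
then `f` is grouplike. -/
theorem stmt_17 {R : Type*} [CommRing R] [Algebra ℚ R]
    (f g : List (Fin 2) → R) (hf1 : f [] = 1)
    (hinv₁ : convMul f g = oneSeries) (hinv₂ : convMul g f = oneSeries) :
    (IsGrouplike f → IsPrimitive (convMul (convMul g e1Series) f)) ∧
      ((∀ n : ℕ, 1 ≤ n → f (List.replicate n (1 : Fin 2)) = 0) →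
        IsPrimitive (convMul (convMul g e1Series) f) → IsGrouplike f) :=
  stmt_17_general f g hf1 hinv₁ hinv₂
end
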